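/- arXiv:0705.0938 — 2 statements merged into one kernel-verified Lean document; each statement's English description precedes it below -/
import Mathlib

section
/- A connected graph has metric dimension 1 if and only if it is a path on at least 2 vertices. -/
/-- `S` resolves `G` if every pair of distinct vertices has different
distances to some vertex of `S`. -/
def Resolves {V : Type*} (G : SimpleGraph V) (S : Set V) : Prop :=
  ∀ v w : V, v ≠ w → ∃ x ∈ S, G.dist v x ≠ G.dist w x

/-- The metric dimension: the minimum cardinality of a resolving set. -/
noncomputable def metricDim {V : Type*} (G : SimpleGraph V) : ℕ :=
  sInf {n | ∃ S : Set V, Resolves G S ∧ S.ncard = n}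

/-!
If a single vertex `x` resolves `G`, then `v ↦ d(v, x)` is injective and takes values below
`|V|` (a shortest path has at most `|V|` vertices), so it is a bijection `V ≃ Fin |V|`. Along an
edge this distance changes by at most one, and every vertex at distance `k + 1` has a neighbour at
distance `k`; by injectivity that neighbour is the unique vertex at distance `k`. Hence two
vertices are adjacent exactly when their distances to `x` are consecutive, i.e. the bijection is
an isomorphism onto a path. Conversely, an end vertex of a path resolves it.
-/

open Function

namespace SimpleGraph

variable {V W : Type*} {G : SimpleGraph V} {G' : SimpleGraph W}

theorem Hom.edist_le (f : G →g G') (u v : V) : G'.edist (f u) (f v) ≤ G.edist u v :=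
  le_sInf <| Set.forall_mem_range.2 fun p => (SimpleGraph.edist_le (p.map f)).trans_eq (by simp)

theorem Iso.edist_eq (e : G ≃g G') (u v : V) : G'.edist (e u) (e v) = G.edist u v :=
  le_antisymm (e.toHom.edist_le u v) (by simpa using e.symm.toHom.edist_le (e u) (e v))

theorem Iso.dist_eq (e : G ≃g G') (u v : V) : G'.dist (e u) (e v) = G.dist u v := by
  simp only [dist, e.edist_eq]

theorem dist_lt_card [Fintype V] (u v : V) : G.dist u v < Fintype.card V := by
  by_cases h : G.Reachable u v
  · obtain ⟨p, hp, hlen⟩ := h.exists_path_of_dist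
    exact hlen ▸ hp.length_lt
  · rw [dist_eq_zero_of_not_reachable h]
    exact Fintype.card_pos_iff.2 ⟨u⟩

theorem exists_adj_dist_eq_of_dist_eq_succ {v x : V} {k : ℕ} (h : G.dist v x = k + 1) :
    ∃ u, G.Adj v u ∧ G.dist u x = k := by
  obtain ⟨p, hp⟩ := exists_walk_of_dist_ne_zero (show G.dist v x ≠ 0 by omega)
  rw [← hp] at h
  cases p with
  | nil => simp at h
  | cons hadj q =>
    refine ⟨_, hadj, le_antisymm ?_ ?_⟩
    · have := dist_le q
      rw [Walk.length_cons] at h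
      omega
    · have := hadj.reachable.dist_triangle_left x
      rw [dist_eq_one_iff_adj.2 hadj] at this
      omega

theorem adj_iff_dist_succ_of_injective_dist {x : V} (hx : Injective (G.dist · x)) {v w : V} :
    G.Adj v w ↔ G.dist v x + 1 = G.dist w x ∨ G.dist w x + 1 = G.dist v x := by
  constructor
  · intro hvw
    have hne : G.dist v x ≠ G.dist w x := hx.ne hvw.ne
    have := hvw.diff_dist_adj (u := x)
    rw [dist_comm (u := x), dist_comm (u := x)] at this
    omega
  · rintro (h | h)
    · obtain ⟨u, hwu, hu⟩ := exists_adj_dist_eq_of_dist_eq_succ h.symm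
      exact hx hu ▸ hwu.symm
    · obtain ⟨u, hvu, hu⟩ := exists_adj_dist_eq_of_dist_eq_succ h.symm
      exact hx hu ▸ hvu

theorem nonempty_iso_pathGraph_of_injective_dist [Fintype V] {x : V}
    (hx : Injective (G.dist · x)) : Nonempty (G ≃g pathGraph (Fintype.card V)) := by
  let f : V → Fin (Fintype.card V) := fun v => ⟨G.dist v x, dist_lt_card v x⟩
  have hf : Bijective f := (Fintype.bijective_iff_injective_and_card f).2
    ⟨fun v w h => hx (congrArg Fin.val h), (Fintype.card_fin _).symm⟩
  refine ⟨{ toEquiv := Equiv.ofBijective f hf, map_rel_iff' := ?_ }⟩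
  intro v w
  simp only [Equiv.ofBijective_apply, pathGraph_adj, f]
  exact (adj_iff_dist_succ_of_injective_dist hx).symm

theorem pathGraph_le_add_length {n : ℕ} {i j : Fin n} (p : (pathGraph n).Walk i j) :
    (i : ℕ) ≤ j + p.length := by
  induction p with
  | nil => simp
  | cons hadj _ ih =>
    rw [pathGraph_adj] at hadj
    rw [Walk.length_cons]
    omega

theorem pathGraph_dist_zero {n : ℕ} (i : Fin (n + 1)) : (pathGraph (n + 1)).dist i 0 = i := by
  refine le_antisymm ?_ ?_
  · induction i using Fin.induction with
    | zero => simp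
    | succ i ih =>
      have hadj : (pathGraph (n + 1)).Adj i.succ i.castSucc := by simp [pathGraph_adj]
      have := hadj.reachable.dist_triangle_left 0
      rw [dist_eq_one_iff_adj.2 hadj] at this
      simp only [Fin.val_castSucc, Fin.val_succ] at ih ⊢
      omega
  · obtain ⟨p, hp⟩ := (pathGraph_connected n).exists_walk_length_eq_dist i 0
    simpa [hp] using pathGraph_le_add_length p

theorem injective_dist_of_iso_pathGraph {n : ℕ} (e : G ≃g pathGraph (n + 1)) :
    Injective (G.dist · (e.symm 0)) := by
  have hdist (v : V) : G.dist v (e.symm 0) = e v := by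
    rw [← e.dist_eq, e.apply_symm_apply, pathGraph_dist_zero]
  intro v w h
  exact e.injective (Fin.ext (by simpa only [hdist] using h))

end SimpleGraph

section MetricDim

variable {V : Type*} {G : SimpleGraph V}

theorem resolves_singleton_iff {x : V} : Resolves G {x} ↔ Injective (G.dist · x) := by
  simp only [Resolves, Set.mem_singleton_iff, exists_eq_left]
  exact ⟨fun h v w hvw => by_contra fun hne => h v w hne hvw, fun h v w => h.ne⟩

theorem resolves_empty_iff : Resolves G ∅ ↔ Subsingleton V := by
  simp [Resolves, subsingleton_iff]

theorem metricDim_le_ncard {S : Set V} (hS : Resolves G S) : metricDim G ≤ S.ncard :=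
  Nat.sInf_le ⟨S, hS, rfl⟩

-- `Set.ncard` of an infinite set is `0`, so `metricDim` is junk on infinite graphs.
theorem metricDim_eq_one_iff [Finite V] :
    metricDim G = 1 ↔ Nontrivial V ∧ ∃ x, Resolves G {x} := by
  rw [← not_subsingleton_iff_nontrivial, ← resolves_empty_iff]
  constructor
  · intro h
    obtain ⟨S, hS, hcard⟩ := Nat.sInf_mem (Nat.nonempty_of_sInf_eq_succ h)
    obtain ⟨x, rfl⟩ := Set.ncard_eq_one.1 (hcard.trans h)
    refine ⟨fun h0 => ?_, x, hS⟩
    have := metricDim_le_ncard h0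
    rw [h, Set.ncard_empty] at this
    omega
  · rintro ⟨hV, x, hx⟩
    refine le_antisymm ((metricDim_le_ncard hx).trans_eq (Set.ncard_singleton x)) ?_
    refine Nat.one_le_iff_ne_zero.2 fun h0 => ?_
    rcases Nat.sInf_eq_zero.1 h0 with ⟨S, hS, hS0⟩ | hempty
    · exact hV ((Set.ncard_eq_zero (Set.toFinite S)).1 hS0 ▸ hS)
    · exact hempty.subset ⟨{x}, hx, rfl⟩

end MetricDim

theorem metricDim_eq_one_iff_path_general {V : Type*} [Fintype V] (G : SimpleGraph V) :
    metricDim G = 1 ↔ ∃ n : ℕ, 2 ≤ n ∧ Nonempty (G ≃g SimpleGraph.pathGraph n) := by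
  simp only [metricDim_eq_one_iff, resolves_singleton_iff]
  constructor
  · rintro ⟨hV, x, hx⟩
    exact ⟨Fintype.card V, Fintype.one_lt_card_iff_nontrivial.2 hV,
      SimpleGraph.nonempty_iso_pathGraph_of_injective_dist hx⟩
  · rintro ⟨n, hn, ⟨e⟩⟩
    obtain ⟨m, rfl⟩ := Nat.exists_eq_add_of_le' hn
    exact ⟨e.toEquiv.nontrivial, _, SimpleGraph.injective_dist_of_iso_pathGraph e⟩

theorem metricDim_eq_one_iff_path {V : Type*} [Fintype V] (G : SimpleGraph V)
    (hG : G.Connected) :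
    metricDim G = 1 ↔ ∃ n : ℕ, 2 ≤ n ∧ Nonempty (G ≃g SimpleGraph.pathGraph n) :=
  metricDim_eq_one_iff_path_general G
end

section
/- Every connected graph with diameter D and metric dimension β has at most D^β + β vertices. -/
/-- The diameter: the maximum distance between two vertices. -/
noncomputable def gdiam {V : Type*} (G : SimpleGraph V) : ℕ :=
  sSup {d | ∃ u v : V, G.dist u v = d}

/-!
A resolving set `S` identifies every vertex by its vector of distances to `S`. A vertex outside
`S` is at distance between `1` and `D` from each vertex of `S`, so its vector takes one of at most
`D ^ |S|` values; hence at most `D ^ β` vertices lie outside a resolving set of size `β`.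
-/

section

variable {V : Type*} {G : SimpleGraph V}

theorem dist_le_gdiam [Finite V] (u v : V) : G.dist u v ≤ gdiam G := by
  have hfin : {d | ∃ u v : V, G.dist u v = d}.Finite :=
    (Set.finite_range fun p : V × V => G.dist p.1 p.2).subset
      (by rintro _ ⟨u, v, rfl⟩; exact ⟨(u, v), rfl⟩)
  exact le_csSup hfin.bddAbove ⟨u, v, rfl⟩

theorem resolves_univ (hG : G.Connected) : Resolves G Set.univ := fun v _ hvw =>
  ⟨v, trivial, by rw [SimpleGraph.dist_self]; exact (hG.pos_dist_of_ne hvw.symm).ne⟩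

theorem exists_resolves_ncard_eq_metricDim (hG : G.Connected) :
    ∃ S, Resolves G S ∧ S.ncard = metricDim G :=
  Nat.sInf_mem (s := {n | ∃ S : Set V, Resolves G S ∧ S.ncard = n}) ⟨_, _, resolves_univ hG, rfl⟩

theorem Resolves.ncard_compl_le [Finite V] (hG : G.Connected) {S : Set V} (hS : Resolves G S)
    {D : ℕ} (hD : ∀ u v, G.dist u v ≤ D) : Sᶜ.ncard ≤ D ^ S.ncard := by
  have hpos (v : ↥Sᶜ) (x : ↥S) : 0 < G.dist v x :=
    hG.pos_dist_of_ne fun h => v.2 (h ▸ x.2)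
  let f : ↥Sᶜ → ↥S → Fin D := fun v x =>
    ⟨G.dist v x - 1, by have := hpos v x; have := hD v x; omega⟩
  have hf : Function.Injective f := by
    intro v w hvw
    by_contra hne
    obtain ⟨x, hxS, hx⟩ := hS v w fun h => hne (Subtype.ext h)
    have hshift : G.dist v x - 1 = G.dist w x - 1 := congrArg Fin.val (congrFun hvw ⟨x, hxS⟩)
    have hv : 0 < G.dist v x := hpos v ⟨x, hxS⟩
    have hw : 0 < G.dist w x := hpos w ⟨x, hxS⟩
    omega
  calc Sᶜ.ncard = Nat.card ↥Sᶜ := rfl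
    _ ≤ Nat.card (↥S → Fin D) := Nat.card_le_card_of_injective f hf
    _ = D ^ S.ncard := by rw [Nat.card_fun, Nat.card_fin]; rfl

end

theorem card_le_diam_pow_dim_add_dim {V : Type*} [Fintype V] (G : SimpleGraph V)
    (hG : G.Connected) (D β : ℕ) (hD : gdiam G = D) (hβ : metricDim G = β) :
    Fintype.card V ≤ D ^ β + β := by
  obtain ⟨S, hS, rfl⟩ := hβ ▸ exists_resolves_ncard_eq_metricDim hG
  have hcompl := hS.ncard_compl_le hG fun u v => hD ▸ dist_le_gdiam u v
  rw [← Nat.card_eq_fintype_card, ← Set.ncard_add_ncard_compl S]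
  omega
end
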